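/- arXiv:1703.07872 — 5 statements merged into one kernel-verified Lean document; each statement's English description precedes it below -/
import Mathlib

section
/- Let (ψ, μ) be a C-bounded random feature scheme for a normalized kernel k on a measurable space X, with ψ jointly measurable, and let f̌ ∈ L²(Ω, μ) be complex-valued. Define f(x) = E_{ω∼μ}[Re(f̌(ω) · conj(ψ(ω,x)))] and, for i.i.d. samples ω₁, …, ω_q from μ, f_ω(x) = (1/q) ∑_{i=1}^q Re(f̌(ω_i) · conj(ψ(ω_i, x))). Then for every probability measure χ on X, E_ω[ ( ∫_X |f(x) − f_ω(x)|² dχ(x) )^{1/2} ] ≤ C ‖f̌‖_{L²(μ)} / √q. -/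
/-!
For a fixed `x` the terms `Re (f̌ (ωᵢ) * conj (ψ (ωᵢ, x)))` are i.i.d. with mean `f x`, so the
mean-square error of their average is their variance divided by `q`, and that variance is at most
`E |f̌ ψ|² ≤ C² ‖f̌‖²`. Integrating over `χ` (Tonelli) bounds `E_ω ‖f - f_ω‖²_{L²(χ)}` by
`C² ‖f̌‖² / q`, and Jensen's inequality for the concave square root passes to
`E_ω ‖f - f_ω‖_{L²(χ)}`.
-/

open MeasureTheory ProbabilityTheory

section EmpiricalMean

variable {Ω : Type*} [MeasurableSpace Ω] {μ : Measure Ω} [IsProbabilityMeasure μ] {q : ℕ}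

lemma integral_empiricalMean {g : Ω → ℝ} (hg : Integrable g μ) (hq : 0 < q) :
    ∫ w, (1 / (q : ℝ)) * ∑ i, g (w i) ∂(Measure.pi fun _ : Fin q => μ) = ∫ ω, g ω ∂μ := by
  rw [integral_const_mul, integral_finsetSum _ fun i _ => integrable_comp_eval hg]
  simp only [integral_comp_eval (μ := fun _ => μ) hg.aestronglyMeasurable, Finset.sum_const,
    Finset.card_univ, Fintype.card_fin, nsmul_eq_mul]
  field_simp

lemma integrable_sq_sub_empiricalMean {g : Ω → ℝ} (hg : MemLp g 2 μ) (c : ℝ) :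
    Integrable (fun w => (c - (1 / (q : ℝ)) * ∑ i, g (w i)) ^ 2)
      (Measure.pi fun _ : Fin q => μ) := by
  refine MemLp.integrable_sq ((memLp_const c).sub (MemLp.const_mul ?_ _))
  exact memLp_finsetSum (f := fun i (w : Fin q → Ω) => g (w i)) Finset.univ
    fun i _ => hg.comp_measurePreserving (measurePreserving_eval (fun _ => μ) i)

lemma integral_sq_sub_empiricalMean {g : Ω → ℝ} (hg : MemLp g 2 μ) (hq : 0 < q) :
    ∫ w, (∫ ω, g ω ∂μ - (1 / (q : ℝ)) * ∑ i, g (w i)) ^ 2 ∂(Measure.pi fun _ : Fin q => μ)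
      = Var[g; μ] / q := by
  set P := Measure.pi fun _ : Fin q => μ
  have hg₁ := hg.integrable one_le_two
  have hvar_sum : Var[∑ i : Fin q, fun w : Fin q → Ω => g (w i); P] = q * Var[g; μ] := by
    rw [variance_sum_pi fun _ => hg]; simp
  have hsum_meas : AEMeasurable (∑ i : Fin q, fun w : Fin q → Ω => g (w i)) P :=
    Finset.aemeasurable_sum _ fun i _ => (integrable_comp_eval hg₁).aemeasurable
  calc _ = Var[(1 / (q : ℝ)) • ∑ i : Fin q, fun w : Fin q → Ω => g (w i); P] := by
        have hmean : (1 / (q : ℝ)) • ∑ i : Fin q, (fun w : Fin q → Ω => g (w i))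
            = fun w => (1 / (q : ℝ)) * ∑ i, g (w i) := by
          ext w; simp
        rw [variance_eq_integral (hsum_meas.const_smul _), hmean, integral_empiricalMean hg₁ hq]
        congr 1 with w
        ring
    _ = Var[g; μ] / q := by
        rw [variance_smul, hvar_sum]
        field_simp

end EmpiricalMean

section

variable {α β : Type*} [MeasurableSpace α] [MeasurableSpace β] {μ : Measure α} {ν : Measure β}

lemma integrable_uncurry_of_integral_le [SFinite μ] [IsFiniteMeasure ν] {S : α → β → ℝ} {b : ℝ}
    (hS : Measurable (Function.uncurry S)) (hS₀ : ∀ x y, 0 ≤ S x y)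
    (hint : ∀ y, Integrable (S · y) μ) (hb : ∀ y, ∫ x, S x y ∂μ ≤ b) :
    Integrable (Function.uncurry S) (μ.prod ν) := by
  refine (integrable_prod_iff' hS.aestronglyMeasurable).2 ⟨.of_forall hint, .of_bound
    hS.stronglyMeasurable.norm.integral_prod_left'.aestronglyMeasurable b (.of_forall fun y => ?_)⟩
  have h₀ : 0 ≤ ∫ x, S x y ∂μ := integral_nonneg (hS₀ · y)
  simpa only [Function.uncurry_apply_pair, Real.norm_eq_abs, abs_of_nonneg (hS₀ _ _),
    abs_of_nonneg h₀] using hb y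

lemma integral_sqrt_le_sqrt_integral [IsProbabilityMeasure μ] {T : α → ℝ} (hT : Integrable T μ)
    (hT₀ : ∀ x, 0 ≤ T x) : ∫ x, √(T x) ∂μ ≤ √(∫ x, T x ∂μ) := by
  have hsqrt : MemLp (fun x => √(T x)) 2 μ := by
    rw [memLp_two_iff_integrable_sq (Real.continuous_sqrt.comp_aestronglyMeasurable hT.1)]
    simpa only [Real.sq_sqrt (hT₀ _)] using hT
  exact Real.strictConcaveOn_sqrt.concaveOn.le_map_integral Real.continuous_sqrt.continuousOn
    isClosed_Ici (.of_forall hT₀) hT (hsqrt.integrable one_le_two)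

end

theorem integral_sqrt_integral_sq_sub_empiricalMean_le {Ω X : Type*} [MeasurableSpace Ω]
    [MeasurableSpace X] {μ : Measure Ω} [IsProbabilityMeasure μ] (χ : Measure X)
    [IsProbabilityMeasure χ] {G : Ω → X → ℝ} (hG : Measurable (Function.uncurry G))
    (hG₂ : ∀ x, MemLp (G · x) 2 μ) {b : ℝ} (hb : ∀ x, Var[(G · x); μ] ≤ b) {q : ℕ} (hq : 0 < q) :
    ∫ w, √(∫ x, (∫ ω, G ω x ∂μ - (1 / (q : ℝ)) * ∑ i, G (w i) x) ^ 2 ∂χ)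
        ∂(Measure.pi fun _ : Fin q => μ) ≤ √(b / q) := by
  set S : (Fin q → Ω) → X → ℝ := fun w x => (∫ ω, G ω x ∂μ - (1 / (q : ℝ)) * ∑ i, G (w i) x) ^ 2
  have hS_meas : Measurable (Function.uncurry S) := by
    have hmean : Measurable fun x => ∫ ω, G ω x ∂μ :=
      hG.stronglyMeasurable.integral_prod_left.measurable
    have hterm (i : Fin q) : Measurable fun p : (Fin q → Ω) × X => G (p.1 i) p.2 :=
      hG.comp (f := fun p : (Fin q → Ω) × X => (p.1 i, p.2)) (by fun_prop)
    change Measurable fun p : (Fin q → Ω) × X =>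
      (∫ ω, G ω p.2 ∂μ - (1 / (q : ℝ)) * ∑ i, G (p.1 i) p.2) ^ 2
    exact ((hmean.comp measurable_snd).sub
      (measurable_const.mul (Finset.measurable_sum _ fun i _ => hterm i))).pow_const 2
  have hS_le (x : X) : ∫ w, S w x ∂(Measure.pi fun _ : Fin q => μ) ≤ b / q := by
    rw [integral_sq_sub_empiricalMean (hG₂ x) hq]
    gcongr
    exact hb x
  have hS_int := integrable_uncurry_of_integral_le (ν := χ) hS_meas (fun _ _ => sq_nonneg _)
    (fun x => integrable_sq_sub_empiricalMean (hG₂ x) _) hS_le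
  calc _ ≤ √(∫ w, ∫ x, S w x ∂χ ∂(Measure.pi fun _ : Fin q => μ)) :=
        integral_sqrt_le_sqrt_integral hS_int.integral_prod_left
          fun w => integral_nonneg fun x => sq_nonneg _
    _ ≤ √(b / q) := by
        rw [integral_integral_swap hS_int]
        gcongr
        simpa using integral_mono hS_int.integral_prod_right (integrable_const _) hS_le

theorem function_approximation_L2_general
    {Ω X : Type*} [MeasurableSpace Ω] [MeasurableSpace X]
    (μ : Measure Ω) [IsProbabilityMeasure μ]
    (ψ : Ω → X → ℂ) (C : ℝ)
    (hmeas : Measurable (Function.uncurry ψ))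
    (hbdd : ∀ ω x, ‖ψ ω x‖ ≤ C)
    (fc : Ω → ℂ) (hfcmeas : Measurable fc) (hfcL2 : MemLp fc 2 μ)
    (f : X → ℝ) (hf : ∀ x, f x = ∫ ω, (fc ω * (starRingEnd ℂ) (ψ ω x)).re ∂μ)
    (q : ℕ) (hq : 0 < q)
    (χ : Measure X) [IsProbabilityMeasure χ] :
    ∫ w : Fin q → Ω,
        Real.sqrt (∫ x,
          (f x - (1 / (q : ℝ)) * ∑ i, (fc (w i) * (starRingEnd ℂ) (ψ (w i) x)).re) ^ 2 ∂χ)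
        ∂(Measure.pi fun _ : Fin q => μ)
      ≤ C * Real.sqrt (∫ ω, ‖fc ω‖ ^ 2 ∂μ) / Real.sqrt q := by
  set G : Ω → X → ℝ := fun ω x => (fc ω * (starRingEnd ℂ) (ψ ω x)).re
  obtain rfl : f = fun x => ∫ ω, G ω x ∂μ := funext hf
  have hG_meas : Measurable (Function.uncurry G) := by fun_prop
  have hG_le (ω : Ω) (x : X) : ‖G ω x‖ ≤ C * ‖fc ω‖ :=
    calc ‖G ω x‖ ≤ ‖fc ω‖ * ‖ψ ω x‖ := by
          simpa only [Real.norm_eq_abs, norm_mul, Complex.norm_conj] using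
            Complex.abs_re_le_norm (fc ω * (starRingEnd ℂ) (ψ ω x))
      _ ≤ C * ‖fc ω‖ := by rw [mul_comm]; gcongr; exact hbdd ω x
  have hG₂ (x : X) : MemLp (G · x) 2 μ :=
    (hfcL2.norm.const_mul C).mono' (hG_meas.comp measurable_prodMk_right).aestronglyMeasurable
      (.of_forall (hG_le · x))
  have hG_var (x : X) : Var[(G · x); μ] ≤ C ^ 2 * ∫ ω, ‖fc ω‖ ^ 2 ∂μ := by
    refine (variance_le_expectation_sq (hG₂ x).1).trans ?_
    rw [← integral_const_mul]
    refine integral_mono (hG₂ x).integrable_sq (hfcL2.norm.integrable_sq.const_mul _) fun ω => ?_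
    simpa only [Pi.pow_apply, Real.norm_eq_abs, sq_abs, mul_pow] using
      pow_le_pow_left₀ (norm_nonneg _) (hG_le ω x) 2
  have hC : 0 ≤ C := (norm_nonneg _).trans (hbdd (nonempty_of_isProbabilityMeasure μ).some
    (nonempty_of_isProbabilityMeasure χ).some)
  calc _ ≤ √(C ^ 2 * (∫ ω, ‖fc ω‖ ^ 2 ∂μ) / q) :=
        integral_sqrt_integral_sq_sub_empiricalMean_le χ hG_meas hG₂ hG_var hq
    _ = C * √(∫ ω, ‖fc ω‖ ^ 2 ∂μ) / √q := by
        rw [Real.sqrt_div' _ (Nat.cast_nonneg q), Real.sqrt_mul (sq_nonneg C), Real.sqrt_sq hC]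

/-- **Function approximation in `L²(χ)` norm.**
`(ψ, μ)` is a `C`-bounded RFS (with `ψ` jointly measurable) for the normalized kernel `k`.
For `f̌ ∈ L²(Ω,μ)`, `f(x) = E_ω[Re(f̌(ω) conj (ψ(ω,x)))]` and the empirical approximation
`f_ω(x) = (1/q) ∑ᵢ Re(f̌(ωᵢ) conj (ψ(ωᵢ,x)))` from `q` i.i.d. samples, for every
probability measure `χ` on `X` we have `E_ω ‖f - f_ω‖_{2,χ} ≤ C ‖f̌‖_{L²(μ)} / √q`. -/
theorem function_approximation_L2
    {Ω X : Type*} [MeasurableSpace Ω] [MeasurableSpace X]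
    (μ : Measure Ω) [IsProbabilityMeasure μ]
    (ψ : Ω → X → ℂ) (k : X → X → ℝ) (C : ℝ)
    (hmeas : Measurable (Function.uncurry ψ))
    (hL2 : ∀ x, MemLp (fun ω => ψ ω x) 2 μ)
    (hbdd : ∀ ω x, ‖ψ ω x‖ ≤ C)
    (hnormalized : ∀ x, k x x = 1)
    (hkernel : ∀ x x', ∫ ω, ψ ω x * (starRingEnd ℂ) (ψ ω x') ∂μ = (k x x' : ℂ))
    (fc : Ω → ℂ) (hfcmeas : Measurable fc) (hfcL2 : MemLp fc 2 μ)
    (f : X → ℝ) (hf : ∀ x, f x = ∫ ω, (fc ω * (starRingEnd ℂ) (ψ ω x)).re ∂μ)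
    (q : ℕ) (hq : 0 < q)
    (χ : Measure X) [IsProbabilityMeasure χ] :
    ∫ w : Fin q → Ω,
        Real.sqrt (∫ x,
          (f x - (1 / (q : ℝ)) * ∑ i, (fc (w i) * (starRingEnd ℂ) (ψ (w i) x)).re) ^ 2 ∂χ)
        ∂(Measure.pi fun _ : Fin q => μ)
      ≤ C * Real.sqrt (∫ ω, ‖fc ω‖ ^ 2 ∂μ) / Real.sqrt q :=
  function_approximation_L2_general μ ψ C hmeas hbdd fc hfcmeas hfcL2 f hf q hq χ
end

section
/- Let (ψ, μ) be a C-bounded random feature scheme for a normalized kernel k on a set X. Define ψ' : (Ω × {0, π/2}) × X → ℝ by ψ'((ω, b), x) = √2 · Re(e^{ib} ψ(ω, x)), and let ν be the product of μ with the uniform distribution on the two-point set {0, π/2}. Then (ψ', ν) is a √2·C-bounded random feature scheme for k; that is, |ψ'((ω,b),x)| ≤ √2·C for all ω, b, x, and E_{(ω,b)∼ν}[ψ'((ω,b),x) · ψ'((ω,b),x')] = k(x,x') for all x, x' ∈ X. -/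
/-!
Rotating `z` by `e^{ib}`, `b ∈ {0, π/2}`, turns its real part into `Re z` or `-Im z`, so the
average over `b` of `Re(e^{ib} z) Re(e^{ib} w)` is `(Re z Re w + Im z Im w) / 2 = Re(z w̄) / 2`.
The factor `(√2)² = 2` cancels the `1/2`, and Fubini then gives
`∫ Re(ψ(ω, x) conj ψ(ω, x')) dμ = Re k(x, x') = k(x, x')`. The bound holds because a unit phase
and taking real parts do not increase the modulus.
-/

open MeasureTheory

/-- The phase shift: `b ↦ 0` for `false` and `b ↦ π/2` for `true`, encoding the
two-point set `{0, π/2}`. -/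
noncomputable def phaseShift : Bool → ℝ := fun b => if b then Real.pi / 2 else 0

open ComplexConjugate

lemma norm_exp_phaseShift_mul (b : Bool) (z : ℂ) :
    ‖Complex.exp (Complex.I * (phaseShift b : ℂ)) * z‖ = ‖z‖ := by
  rw [norm_mul, Complex.norm_exp_I_mul_ofReal, one_mul]

lemma re_exp_phaseShift_false_mul (z : ℂ) :
    (Complex.exp (Complex.I * (phaseShift false : ℂ)) * z).re = z.re := by
  simp [phaseShift]

lemma re_exp_phaseShift_true_mul (z : ℂ) :
    (Complex.exp (Complex.I * (phaseShift true : ℂ)) * z).re = -z.im := by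
  have h : Complex.I * (phaseShift true : ℂ) = Real.pi / 2 * Complex.I := by
    simp only [phaseShift, if_true]; push_cast; ring
  simp [h, Complex.exp_pi_div_two_mul_I]

lemma integral_uniformOfFintype_bool (f : Bool → ℝ) :
    ∫ b, f b ∂(PMF.uniformOfFintype Bool).toMeasure = (f false + f true) / 2 := by
  simp only [PMF.integral_eq_sum, PMF.uniformOfFintype_apply, Fintype.card_bool,
    Fintype.sum_bool, smul_eq_mul]
  norm_num
  ring

lemma integral_phaseShift_re_mul_re (z w : ℂ) :
    ∫ b, Real.sqrt 2 * (Complex.exp (Complex.I * (phaseShift b : ℂ)) * z).re *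
        (Real.sqrt 2 * (Complex.exp (Complex.I * (phaseShift b : ℂ)) * w).re)
      ∂(PMF.uniformOfFintype Bool).toMeasure = (z * conj w).re := by
  rw [integral_uniformOfFintype_bool, re_exp_phaseShift_false_mul, re_exp_phaseShift_false_mul,
    re_exp_phaseShift_true_mul, re_exp_phaseShift_true_mul]
  have hsq : Real.sqrt 2 * Real.sqrt 2 = 2 := Real.mul_self_sqrt zero_le_two
  simp only [Complex.mul_re, Complex.conj_re, Complex.conj_im]
  linear_combination (z.re * w.re + z.im * w.im) / 2 * hsq

lemma integrable_mul_of_norm_le {α 𝕜 : Type*} [MeasurableSpace α] {μ : Measure α}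
    [IsFiniteMeasure μ] [NormedRing 𝕜] {f g : α → 𝕜} {c d : ℝ}
    (hf : AEStronglyMeasurable f μ) (hg : AEStronglyMeasurable g μ)
    (hfc : ∀ a, ‖f a‖ ≤ c) (hgd : ∀ a, ‖g a‖ ≤ d) : Integrable (fun a => f a * g a) μ :=
  (Integrable.of_bound hf c (.of_forall hfc)).mul_bdd hg (.of_forall hgd)

theorem real_rfs_from_complex_general
    {Ω X : Type*} [MeasurableSpace Ω]
    (μ : Measure Ω) [IsProbabilityMeasure μ]
    (ψ : Ω → X → ℂ) (k : X → X → ℝ) (C : ℝ)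
    (hmeas : ∀ x, Measurable fun ω => ψ ω x)
    (hbdd : ∀ ω x, ‖ψ ω x‖ ≤ C)
    (hkernel : ∀ x x', ∫ ω, ψ ω x * (starRingEnd ℂ) (ψ ω x') ∂μ = (k x x' : ℂ))
    (ψ' : Ω × Bool → X → ℝ)
    (hψ' : ∀ p x, ψ' p x =
      Real.sqrt 2 * (Complex.exp (Complex.I * (phaseShift p.2 : ℂ)) * ψ p.1 x).re) :
    (∀ p x, |ψ' p x| ≤ Real.sqrt 2 * C) ∧
    (∀ x x', ∫ p, ψ' p x * ψ' p x'
        ∂(μ.prod (PMF.uniformOfFintype Bool).toMeasure) = k x x') := by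
  have hbdd' : ∀ p x, |ψ' p x| ≤ Real.sqrt 2 * C := fun p x => by
    rw [hψ', abs_mul, abs_of_nonneg (Real.sqrt_nonneg 2)]
    gcongr
    exact (Complex.abs_re_le_norm _).trans ((norm_exp_phaseShift_mul _ _).trans_le (hbdd _ _))
  refine ⟨hbdd', fun x x' => ?_⟩
  have hmeas' : ∀ y, Measurable fun p : Ω × Bool => ψ' p y := fun y => by
    simp only [hψ']
    have hphase : Measurable fun b : Bool => Complex.exp (Complex.I * (phaseShift b : ℂ)) :=
      .of_discrete
    exact (Complex.measurable_re.comp ((hphase.comp measurable_snd).mul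
      ((hmeas y).comp measurable_fst))).const_mul _
  have hint : Integrable (fun p => ψ' p x * ψ' p x')
      (μ.prod (PMF.uniformOfFintype Bool).toMeasure) :=
    integrable_mul_of_norm_le (hmeas' x).aestronglyMeasurable (hmeas' x').aestronglyMeasurable
      (hbdd' · x) (hbdd' · x')
  have hintμ : Integrable (fun ω => ψ ω x * conj (ψ ω x')) μ :=
    integrable_mul_of_norm_le (hmeas x).aestronglyMeasurable
      (Complex.continuous_conj.measurable.comp (hmeas x')).aestronglyMeasurable
      (hbdd · x) fun ω => (Complex.norm_conj _).trans_le (hbdd ω x')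
  calc ∫ p, ψ' p x * ψ' p x' ∂(μ.prod (PMF.uniformOfFintype Bool).toMeasure)
      = ∫ ω, (ψ ω x * conj (ψ ω x')).re ∂μ := by
        rw [integral_prod _ hint]
        simp only [hψ', integral_phaseShift_re_mul_re]
    _ = k x x' := by
        rw [← RCLike.re_eq_complex_re, integral_re hintμ, hkernel, RCLike.re_eq_complex_re,
          Complex.ofReal_re]

/-- **From complex to real random feature schemes.**
If `(ψ, μ)` is a `C`-bounded RFS for a normalized kernel `k`, then
`ψ'((ω,b),x) = √2 ⬝ Re(e^{ib} ψ(ω,x))`, with `b` uniform on `{0, π/2}` independent of `ω`,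
is a `√2 C`-bounded real RFS for `k`. -/
theorem real_rfs_from_complex
    {Ω X : Type*} [MeasurableSpace Ω]
    (μ : Measure Ω) [IsProbabilityMeasure μ]
    (ψ : Ω → X → ℂ) (k : X → X → ℝ) (C : ℝ)
    (hmeas : ∀ x, Measurable fun ω => ψ ω x)
    (hbdd : ∀ ω x, ‖ψ ω x‖ ≤ C)
    (hnormalized : ∀ x, k x x = 1)
    (hkernel : ∀ x x', ∫ ω, ψ ω x * (starRingEnd ℂ) (ψ ω x') ∂μ = (k x x' : ℂ))
    (ψ' : Ω × Bool → X → ℝ)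
    (hψ' : ∀ p x, ψ' p x =
      Real.sqrt 2 * (Complex.exp (Complex.I * (phaseShift p.2 : ℂ)) * ψ p.1 x).re) :
    (∀ p x, |ψ' p x| ≤ Real.sqrt 2 * C) ∧
    (∀ x x', ∫ p, ψ' p x * ψ' p x'
        ∂(μ.prod (PMF.uniformOfFintype Bool).toMeasure) = k x x') :=
  real_rfs_from_complex_general μ ψ k C hmeas hbdd hkernel ψ' hψ'
end

section
/- Let d ≥ 1 and ε > 0, and let S^{d−1} = {x ∈ ℝ^d : ‖x‖ = 1}. There is no (√(d/2) − ε)-bounded random feature scheme for the kernel k(x, x') = ⟨x, x'⟩ on S^{d−1}. Equivalently: for every probability measure μ on a measurable space Ω and every measurable ψ : Ω × S^{d−1} → ℂ satisfying E_{ω∼μ}[ψ(ω,x) · conj(ψ(ω,x'))] = ⟨x, x'⟩ for all x, x' ∈ S^{d−1}, one has sup_{ω,x} |ψ(ω, x)| ≥ √(d/2). -/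
/-!
The kernel identity says that `x ↦ ψ(·, x)` preserves inner products from the sphere into
`L²(μ)`, hence respects linear relations: `ψ(·, x) = ∑ᵢ xᵢ ψ(·, eᵢ)` in `L²(μ)`. So for almost
every `ω`, `ψ(ω, ·)` agrees on a countable dense subset of the sphere with the linear functional
`x ↦ ∑ᵢ xᵢ aᵢ`, `aᵢ = ψ(ω, eᵢ)`, whose supremum over the sphere is at least
`max (‖Re a‖, ‖Im a‖) ≥ √(∑ᵢ |aᵢ|² / 2)`. Thus `∑ᵢ |ψ(ω, eᵢ)|² ≤ 2 C²` almost surely, while the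
expectation of the left side is `∑ᵢ k(eᵢ, eᵢ) = d`.
-/

open MeasureTheory

section InnerPreserving

variable {𝕜 H E : Type*} [RCLike 𝕜] [NormedAddCommGroup H] [InnerProductSpace ℝ H]
  [NormedAddCommGroup E] [InnerProductSpace 𝕜 E] {S : Set H} {F : S → E}

theorem norm_sum_smul_eq_of_inner_eq
    (hF : ∀ x y, inner 𝕜 (F x) (F y) = (inner ℝ (x : H) y : 𝕜))
    {ι : Type*} (s : Finset ι) (c : ι → ℝ) (v : ι → S) :
    ‖∑ i ∈ s, (c i : 𝕜) • F (v i)‖ = ‖∑ i ∈ s, c i • (v i : H)‖ := by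
  rw [← sq_eq_sq₀ (norm_nonneg _) (norm_nonneg _), @norm_sq_eq_re_inner 𝕜,
    @norm_sq_eq_re_inner ℝ]
  simp only [sum_inner, inner_sum, inner_smul_left, inner_smul_right, hF]
  simp

theorem eq_sum_smul_of_inner_eq
    (hF : ∀ x y, inner 𝕜 (F x) (F y) = (inner ℝ (x : H) y : 𝕜))
    {ι : Type*} [Fintype ι] (x : S) (c : ι → ℝ) (v : ι → S)
    (hx : (x : H) = ∑ i, c i • (v i : H)) :
    F x = ∑ i, (c i : 𝕜) • F (v i) := by
  -- the relation `x - ∑ i, c i • v i = 0`, indexed by `Option ι`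
  have key := norm_sum_smul_eq_of_inner_eq hF Finset.univ (Option.rec 1 fun i => -c i)
    (Option.rec x v)
  simp only [Fintype.sum_option, Finset.sum_neg_distrib, RCLike.ofReal_neg, neg_smul,
    RCLike.ofReal_one, one_smul, ← hx, ← sub_eq_add_neg, sub_self, norm_zero] at key
  exact sub_eq_zero.1 (norm_eq_zero.1 key)

end InnerPreserving

theorem norm_le_of_forall_abs_inner_le {H : Type*} [NormedAddCommGroup H] [InnerProductSpace ℝ H]
    {u : H} {C : ℝ} (hC : 0 ≤ C) (h : ∀ x, ‖x‖ = 1 → |inner ℝ u x| ≤ C) : ‖u‖ ≤ C := by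
  simpa [innerSL_apply_norm] using
    ContinuousLinearMap.opNorm_le_of_unit_norm (f := innerSL ℝ u) hC (by simpa using h)

theorem sum_norm_sq_le_of_forall_norm_sum_mul_le {ι : Type*} [Fintype ι] (a : ι → ℂ) {C : ℝ}
    (hC : 0 ≤ C)
    (h : ∀ x : Metric.sphere (0 : EuclideanSpace ℝ ι) 1, ‖∑ i, (x.1 i : ℂ) * a i‖ ≤ C) :
    ∑ i, ‖a i‖ ^ 2 ≤ 2 * C ^ 2 := by
  have h' : ∀ x : EuclideanSpace ℝ ι, ‖x‖ = 1 → ‖∑ i, (x i : ℂ) * a i‖ ≤ C := fun x hx =>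
    h ⟨x, by simpa using hx⟩
  have hre : ‖WithLp.toLp 2 fun i => (a i).re‖ ≤ C := by
    refine norm_le_of_forall_abs_inner_le hC fun x hx => le_trans ?_ (h' x hx)
    simpa [PiLp.inner_apply, Complex.re_sum, mul_comm] using
      Complex.abs_re_le_norm (∑ i, (x i : ℂ) * a i)
  have him : ‖WithLp.toLp 2 fun i => (a i).im‖ ≤ C := by
    refine norm_le_of_forall_abs_inner_le hC fun x hx => le_trans ?_ (h' x hx)
    simpa [PiLp.inner_apply, Complex.im_sum, mul_comm] using
      Complex.abs_im_le_norm (∑ i, (x i : ℂ) * a i)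
  calc ∑ i, ‖a i‖ ^ 2
      = ‖WithLp.toLp 2 fun i => (a i).re‖ ^ 2 + ‖WithLp.toLp 2 fun i => (a i).im‖ ^ 2 := by
        rw [EuclideanSpace.norm_sq_eq, EuclideanSpace.norm_sq_eq, ← Finset.sum_add_distrib]
        refine Finset.sum_congr rfl fun i _ => ?_
        rw [Complex.sq_norm, Complex.normSq_apply, Real.norm_eq_abs, Real.norm_eq_abs, sq_abs,
          sq_abs, sq, sq]
    _ ≤ C ^ 2 + C ^ 2 := by gcongr
    _ = 2 * C ^ 2 := by ring

theorem MeasureTheory.MemLp.inner_toLp_eq_integral {Ω 𝕜 : Type*} [MeasurableSpace Ω] [RCLike 𝕜]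
    {μ : Measure Ω} {f g : Ω → 𝕜} (hf : MemLp f 2 μ) (hg : MemLp g 2 μ) :
    inner 𝕜 (hf.toLp f) (hg.toLp g) = ∫ ω, g ω * (starRingEnd 𝕜) (f ω) ∂μ := by
  rw [L2.inner_def]
  refine integral_congr_ae ?_
  filter_upwards [hf.coeFn_toLp, hg.coeFn_toLp] with ω hfω hgω
  rw [hfω, hgω, RCLike.inner_apply]

structure IsRandomFeatureScheme {Ω X : Type*} [MeasurableSpace Ω] (μ : Measure Ω)
    (ψ : Ω → X → ℂ) (k : X → X → ℂ) : Prop where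
  memLp : ∀ x, MemLp (fun ω => ψ ω x) 2 μ
  integral_mul_conj : ∀ x x', ∫ ω, ψ ω x * (starRingEnd ℂ) (ψ ω x') ∂μ = k x x'

namespace IsRandomFeatureScheme

variable {Ω X : Type*} [MeasurableSpace Ω] {μ : Measure Ω} {ψ : Ω → X → ℂ} {k : X → X → ℂ}

theorem integral_norm_sq (h : IsRandomFeatureScheme μ ψ k) (x : X) :
    ∫ ω, ‖ψ ω x‖ ^ 2 ∂μ = (k x x).re := by
  have hcast : ∫ ω, ψ ω x * (starRingEnd ℂ) (ψ ω x) ∂μ = ((∫ ω, ‖ψ ω x‖ ^ 2 ∂μ : ℝ) : ℂ) := by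
    simp_rw [Complex.mul_conj', ← Complex.ofReal_pow, integral_complex_ofReal]
  rw [← h.integral_mul_conj, hcast, Complex.ofReal_re]

noncomputable def toL2 (h : IsRandomFeatureScheme μ ψ k) (x : X) : Lp ℂ 2 μ := (h.memLp x).toLp _

theorem coeFn_toL2 (h : IsRandomFeatureScheme μ ψ k) (x : X) :
    h.toL2 x =ᵐ[μ] fun ω => ψ ω x :=
  (h.memLp x).coeFn_toLp

theorem inner_toL2 (h : IsRandomFeatureScheme μ ψ k) (x y : X) :
    inner ℂ (h.toL2 x) (h.toL2 y) = k y x := by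
  rw [toL2, toL2, MemLp.inner_toLp_eq_integral, h.integral_mul_conj]

end IsRandomFeatureScheme

noncomputable def sphereSingle {ι : Type*} [Fintype ι] [DecidableEq ι] (i : ι) :
    Metric.sphere (0 : EuclideanSpace ℝ ι) 1 :=
  ⟨EuclideanSpace.single i 1, by simp⟩

namespace IsRandomFeatureScheme

variable {Ω ι : Type*} [MeasurableSpace Ω] [Fintype ι] [DecidableEq ι] {μ : Measure Ω}
  {ψ : Ω → Metric.sphere (0 : EuclideanSpace ℝ ι) 1 → ℂ}

theorem ae_eq_sum_mul_sphereSingle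
    (h : IsRandomFeatureScheme μ ψ fun x x' => ((inner ℝ x.1 x'.1 : ℝ) : ℂ))
    (x : Metric.sphere (0 : EuclideanSpace ℝ ι) 1) :
    ∀ᵐ ω ∂μ, ψ ω x = ∑ i, (x.1 i : ℂ) * ψ ω (sphereSingle i) := by
  have hlin : h.toL2 x = ∑ i, ((x.1 i : ℝ) : ℂ) • h.toL2 (sphereSingle i) := by
    refine eq_sum_smul_of_inner_eq (fun y z => by rw [h.inner_toL2, real_inner_comm]; rfl)
      x _ _ ?_
    simpa [sphereSingle] using ((EuclideanSpace.basisFun ι ℝ).sum_repr x.1).symm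
  have hsmul : ∀ i, ⇑(((x.1 i : ℝ) : ℂ) • h.toL2 (sphereSingle i)) =ᵐ[μ]
      fun ω => (x.1 i : ℂ) * ψ ω (sphereSingle i) := fun i =>
    (Lp.coeFn_smul _ _).trans ((h.coeFn_toL2 (sphereSingle i)).mono fun ω hω => by simp [hω])
  filter_upwards [h.coeFn_toL2 x,
    Lp.coeFn_fun_finsetSum Finset.univ fun i => ((x.1 i : ℝ) : ℂ) • h.toL2 (sphereSingle i),
    ae_all_iff.2 hsmul] with ω hx hsum hi
  rw [← hx, hlin, hsum]
  exact Finset.sum_congr rfl fun i _ => hi i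

theorem integral_sum_norm_sq_sphereSingle
    (h : IsRandomFeatureScheme μ ψ fun x x' => ((inner ℝ x.1 x'.1 : ℝ) : ℂ)) :
    ∫ ω, ∑ i, ‖ψ ω (sphereSingle i)‖ ^ 2 ∂μ = Fintype.card ι := by
  rw [integral_finsetSum _ fun i _ => (h.memLp _).integrable_norm_pow two_ne_zero]
  simp [h.integral_norm_sq, sphereSingle]

theorem ae_sum_norm_sq_sphereSingle_le
    (h : IsRandomFeatureScheme μ ψ fun x x' => ((inner ℝ x.1 x'.1 : ℝ) : ℂ)) {C : ℝ}
    (hC0 : 0 ≤ C) (hC : ∀ ω x, ‖ψ ω x‖ ≤ C) :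
    ∀ᵐ ω ∂μ, ∑ i, ‖ψ ω (sphereSingle i)‖ ^ 2 ≤ 2 * C ^ 2 := by
  -- linearity holds a.e. only for each fixed `x`; pass through a countable dense set
  obtain ⟨D, hDc, hDd⟩ :=
    TopologicalSpace.exists_countable_dense (Metric.sphere (0 : EuclideanSpace ℝ ι) 1)
  filter_upwards [(ae_ball_iff hDc).2 fun x _ => h.ae_eq_sum_mul_sphereSingle x] with ω hω
  refine sum_norm_sq_le_of_forall_norm_sum_mul_le _ hC0 fun x => ?_
  refine hDd.induction (fun y hy => ?_) (isClosed_le (by fun_prop) continuous_const) x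
  exact hω y hy ▸ hC ω y

end IsRandomFeatureScheme

theorem sphere_rfs_lower_bound_general
    {Ω : Type*} [MeasurableSpace Ω] (d : ℕ) (hd : 1 ≤ d)
    (μ : Measure Ω) [IsProbabilityMeasure μ]
    (ψ : Ω → Metric.sphere (0 : EuclideanSpace ℝ (Fin d)) 1 → ℂ)
    (hL2 : ∀ x, MemLp (fun ω => ψ ω x) 2 μ)
    (hkernel : ∀ x x', ∫ ω, ψ ω x * (starRingEnd ℂ) (ψ ω x') ∂μ
      = ((inner ℝ x.1 x'.1 : ℝ) : ℂ))
    (C : ℝ) (hC : ∀ ω x, ‖ψ ω x‖ ≤ C) :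
    Real.sqrt (d / 2) ≤ C := by
  have h : IsRandomFeatureScheme μ ψ fun x x' => ((inner ℝ x.1 x'.1 : ℝ) : ℂ) := ⟨hL2, hkernel⟩
  have hC0 : 0 ≤ C := by
    obtain ⟨ω⟩ := nonempty_of_isProbabilityMeasure μ
    exact (norm_nonneg _).trans (hC ω (sphereSingle ⟨0, hd⟩))
  have hd2 : (d : ℝ) ≤ 2 * C ^ 2 := calc
    (d : ℝ) = ∫ ω, ∑ i, ‖ψ ω (sphereSingle i)‖ ^ 2 ∂μ := by
      simp [h.integral_sum_norm_sq_sphereSingle]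
    _ ≤ ∫ _, 2 * C ^ 2 ∂μ :=
      integral_mono_of_nonneg (.of_forall fun _ => by positivity) (integrable_const _)
        (h.ae_sum_norm_sq_sphereSingle_le hC0 hC)
    _ = 2 * C ^ 2 := by simp
  rw [Real.sqrt_le_left hC0]
  linarith

/-- **`√(d/2)`-boundedness is optimal for RFS on `S^{d−1}`.**
If `(ψ, μ)` is an RFS for the kernel `k(x,x') = ⟨x,x'⟩` on the unit sphere of `ℝ^d`
(`d ≥ 1`), then any bound `C` with `|ψ(ω,x)| ≤ C` for all `ω, x` satisfies
`C ≥ √(d/2)`; i.e. `sup_{ω,x} |ψ(ω,x)| ≥ √(d/2)`, so for every `ε > 0` there is no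
`(√(d/2) − ε)`-bounded RFS for this kernel. -/
theorem sphere_rfs_lower_bound
    {Ω : Type*} [MeasurableSpace Ω] (d : ℕ) (hd : 1 ≤ d)
    (μ : Measure Ω) [IsProbabilityMeasure μ]
    (ψ : Ω → Metric.sphere (0 : EuclideanSpace ℝ (Fin d)) 1 → ℂ)
    (hmeas : ∀ x, Measurable fun ω => ψ ω x)
    (hL2 : ∀ x, MemLp (fun ω => ψ ω x) 2 μ)
    (hkernel : ∀ x x', ∫ ω, ψ ω x * (starRingEnd ℂ) (ψ ω x') ∂μ
      = ((inner ℝ x.1 x'.1 : ℝ) : ℂ))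
    (C : ℝ) (hC : ∀ ω x, ‖ψ ω x‖ ≤ C) :
    Real.sqrt (d / 2) ≤ C :=
  sphere_rfs_lower_bound_general d hd μ ψ hL2 hkernel C hC
end

section
/- Let d ≥ 1, let S^{d−1} = {x ∈ ℝ^d : ‖x‖ = 1}, and let (ψ, μ) be a random feature scheme for the kernel k(x, x') = ⟨x, x'⟩ on S^{d−1}. Then for every a ∈ S^{d−1}, for μ-almost every ω ∈ Ω: ψ(ω, a) = ∑_{j=1}^d a_j ψ(ω, e_j), where e_1, …, e_d are the standard basis vectors of ℝ^d. -/
/-!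
The features `x ↦ ψ(·, x)` map the sphere into `L²(μ)` with Gram matrix `⟨x, x'⟩`. The norm of a
real linear combination is determined by the Gram matrix, so
`‖ψ(·, a) - ∑ⱼ aⱼ ψ(·, eⱼ)‖_{L²} = ‖a - ∑ⱼ aⱼ eⱼ‖ = 0`.
-/

open MeasureTheory

/-- The `j`-th standard basis vector of `ℝ^d`, as a point of the unit sphere. -/
noncomputable def stdBasisSphere (d : ℕ) (j : Fin d) :
    Metric.sphere (0 : EuclideanSpace ℝ (Fin d)) 1 :=
  ⟨EuclideanSpace.single j (1 : ℝ), by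
    rw [mem_sphere_zero_iff_norm, EuclideanSpace.norm_single]
    norm_num⟩

theorem norm_sum_smul_eq_of_inner_eq_s13 {𝕜 E F ι : Type*} [RCLike 𝕜] [NormedAddCommGroup E]
    [InnerProductSpace ℝ E] [NormedAddCommGroup F] [InnerProductSpace 𝕜 F] [Fintype ι]
    {v : ι → E} {w : ι → F} (h : ∀ i j, inner 𝕜 (w i) (w j) = ((inner ℝ (v i) (v j) : ℝ) : 𝕜))
    (c : ι → ℝ) : ‖∑ i, (c i : 𝕜) • w i‖ = ‖∑ i, c i • v i‖ := by
  have hsq : (‖∑ i, (c i : 𝕜) • w i‖ : 𝕜) ^ 2 = ((‖∑ i, c i • v i‖ ^ 2 : ℝ) : 𝕜) := by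
    rw [← inner_self_eq_norm_sq_to_K, ← real_inner_self_eq_norm_sq]
    simp only [sum_inner, inner_sum, inner_smul_left, inner_smul_right, h, RCLike.conj_ofReal]
    push_cast
    rfl
  exact (pow_left_inj₀ (norm_nonneg _) (norm_nonneg _) two_ne_zero).mp
    (RCLike.ofReal_injective (K := 𝕜) (by exact_mod_cast hsq))

theorem MeasureTheory.L2.inner_toLp {α 𝕜 : Type*} [RCLike 𝕜] [MeasurableSpace α] {μ : Measure α}
    {f g : α → 𝕜} (hf : MemLp f 2 μ) (hg : MemLp g 2 μ) :
    inner 𝕜 (hf.toLp f) (hg.toLp g) = ∫ x, (starRingEnd 𝕜) (f x) * g x ∂μ := by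
  rw [L2.inner_def]
  refine integral_congr_ae ?_
  filter_upwards [hf.coeFn_toLp, hg.coeFn_toLp] with x hfx hgx
  rw [hfx, hgx, RCLike.inner_apply, mul_comm]

theorem MeasureTheory.Lp.coeFn_finset_sum {α E ι : Type*} [MeasurableSpace α] {μ : Measure α}
    [NormedAddCommGroup E] {p : ENNReal} (s : Finset ι) (f : ι → Lp E p μ) :
    ⇑(∑ i ∈ s, f i) =ᵐ[μ] ∑ i ∈ s, ⇑(f i) := by
  classical
  induction s using Finset.induction_on with
  | empty => simpa using Lp.coeFn_zero E p μ
  | insert i s hi ih =>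
    simp only [Finset.sum_insert hi]
    exact (Lp.coeFn_add _ _).trans (ih.add_left)

theorem EuclideanSpace.sum_smul_single {ι : Type*} [Fintype ι] [DecidableEq ι]
    (x : EuclideanSpace ℝ ι) :
    ∑ i, x i • EuclideanSpace.single i (1 : ℝ) = x := by
  simpa using (EuclideanSpace.basisFun ι ℝ).sum_repr x

theorem MeasureTheory.MemLp.ae_eq_sum_of_toLp_eq {α 𝕜 ι : Type*} [RCLike 𝕜] [MeasurableSpace α]
    {μ : Measure α} {p : ENNReal} [Fintype ι] {f : α → 𝕜} {g : ι → α → 𝕜} (hf : MemLp f p μ)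
    (hg : ∀ i, MemLp (g i) p μ) {c : ι → 𝕜} (h : hf.toLp f = ∑ i, c i • (hg i).toLp (g i)) :
    f =ᵐ[μ] fun x => ∑ i, c i * g i x := by
  have hsmul : ∀ᵐ x ∂μ, ∀ i, (c i • (hg i).toLp (g i)) x = c i * g i x :=
    ae_all_iff.2 fun i => by
      filter_upwards [Lp.coeFn_smul (c i) ((hg i).toLp (g i)), (hg i).coeFn_toLp] with x hs hx
      rw [hs, Pi.smul_apply, hx, smul_eq_mul]
  filter_upwards [hf.coeFn_toLp.symm,
    Lp.coeFn_finset_sum Finset.univ fun i => c i • (hg i).toLp (g i), hsmul] with x hfx hsum hsmul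
  rw [hfx, h, hsum, Finset.sum_apply]
  exact Finset.sum_congr rfl fun i _ => hsmul i

theorem rfs_sphere_linear_general
    {Ω : Type*} [MeasurableSpace Ω] (d : ℕ)
    (μ : Measure Ω)
    (ψ : Ω → Metric.sphere (0 : EuclideanSpace ℝ (Fin d)) 1 → ℂ)
    (hL2 : ∀ x, MemLp (fun ω => ψ ω x) 2 μ)
    (hkernel : ∀ x x', ∫ ω, ψ ω x * (starRingEnd ℂ) (ψ ω x') ∂μ
      = ((inner ℝ x.1 x'.1 : ℝ) : ℂ))
    (a : Metric.sphere (0 : EuclideanSpace ℝ (Fin d)) 1) :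
    ∀ᵐ ω ∂μ, ψ ω a = ∑ j, (a.1 j : ℂ) * ψ ω (stdBasisSphere d j) := by
  have hgram : ∀ x y,
      inner ℂ ((hL2 x).toLp _) ((hL2 y).toLp _) = ((inner ℝ x.1 y.1 : ℝ) : ℂ) := by
    intro x y
    simp_rw [L2.inner_toLp, mul_comm, hkernel, real_inner_comm]
  let x : Option (Fin d) → Metric.sphere (0 : EuclideanSpace ℝ (Fin d)) 1 :=
    fun o => o.elim a (stdBasisSphere d)
  let c : Option (Fin d) → ℝ := fun o => o.elim 1 fun j => -a.1 j
  have hrel : ∑ o, c o • (x o).1 = 0 := by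
    simp [x, c, Fintype.sum_option, stdBasisSphere, EuclideanSpace.sum_smul_single]
  have hLp := norm_sum_smul_eq_of_inner_eq_s13 (v := fun o => (x o).1)
    (w := fun o => (hL2 (x o)).toLp _) (fun o o' => hgram (x o) (x o')) c
  rw [hrel, norm_zero, norm_eq_zero, Fintype.sum_option] at hLp
  refine (hL2 a).ae_eq_sum_of_toLp_eq (fun j => hL2 _) ?_
  simpa [x, c, add_eq_zero_iff_eq_neg] using hLp

/-- **Features of an RFS for the sphere kernel are a.s. linear.**
If `(ψ, μ)` is an RFS for the kernel `k(x,x') = ⟨x,x'⟩` on the unit sphere of `ℝ^d`, then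
for every `a ∈ S^{d−1}`, for `μ`-almost every `ω`,
`ψ(ω,a) = ∑ⱼ aⱼ ψ(ω,eⱼ)` where `e₁,…,e_d` is the standard basis. -/
theorem rfs_sphere_linear
    {Ω : Type*} [MeasurableSpace Ω] (d : ℕ) (hd : 1 ≤ d)
    (μ : Measure Ω) [IsProbabilityMeasure μ]
    (ψ : Ω → Metric.sphere (0 : EuclideanSpace ℝ (Fin d)) 1 → ℂ)
    (hmeas : ∀ x, Measurable fun ω => ψ ω x)
    (hL2 : ∀ x, MemLp (fun ω => ψ ω x) 2 μ)
    (hkernel : ∀ x x', ∫ ω, ψ ω x * (starRingEnd ℂ) (ψ ω x') ∂μ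
      = ((inner ℝ x.1 x'.1 : ℝ) : ℂ))
    (a : Metric.sphere (0 : EuclideanSpace ℝ (Fin d)) 1) :
    ∀ᵐ ω ∂μ, ψ ω a = ∑ j, (a.1 j : ℂ) * ψ ω (stdBasisSphere d j) :=
  rfs_sphere_linear_general d μ ψ hL2 hkernel a
end

section
/- Let (ψ¹, μ¹), …, (ψⁿ, μⁿ) be random feature schemes for normalized kernels k¹, …, kⁿ on a common set X, and let α₁, …, αₙ ≥ 0 with ∑_i α_i = 1. Let Ω be the disjoint union (sigma type) of Ω₁, …, Ωₙ, let μ = ∑_i α_i · (pushforward of μ^i under the inclusion Ω_i → Ω), and define ψ((i, ω), x) = ψ^i(ω, x). Then (ψ, μ) is a random feature scheme for the kernel k(x, x') = ∑_{i=1}^n α_i k^i(x, x'); i.e., E_{(i,ω)∼μ}[ψ((i,ω),x) · conj(ψ((i,ω),x'))] = ∑_i α_i k^i(x,x') for all x, x' ∈ X. -/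
open MeasureTheory

section Sigma

variable {ι : Type*} {β : ι → Type*} [∀ i, MeasurableSpace (β i)]

theorem measurable_sigmaMk (i : ι) : Measurable (Sigma.mk i : β i → Sigma β) :=
  Measurable.of_le_map (iInf_le _ i)

theorem measurableEmbedding_sigmaMk (i : ι) :
    MeasurableEmbedding (Sigma.mk i : β i → Sigma β) where
  injective := sigma_mk_injective
  measurable := measurable_sigmaMk i
  measurableSet_image' {s} hs := by
    change MeasurableSet[⨅ j, MeasurableSpace.map (Sigma.mk j) _] _
    refine MeasurableSpace.measurableSet_iInf.2 fun j => ?_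
    obtain rfl | hij := eq_or_ne i j
    · rwa [MeasurableSpace.map_def, sigma_mk_preimage_image_eq_self]
    · rw [MeasurableSpace.map_def, sigma_mk_preimage_image' hij]
      exact MeasurableSet.empty

theorem integral_sum_smul_map_sigmaMk [Fintype ι] {E : Type*} [NormedAddCommGroup E]
    [NormedSpace ℝ E] (μ : ∀ i, Measure (β i)) {c : ι → ENNReal} (hc : ∀ i, c i ≠ ⊤)
    {f : Sigma β → E} (hf : ∀ i, Integrable (fun ω => f ⟨i, ω⟩) (μ i)) :
    ∫ p, f p ∂(Measure.sum fun i => c i • (μ i).map (Sigma.mk i))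
      = ∑ i, (c i).toReal • ∫ ω, f ⟨i, ω⟩ ∂μ i := by
  have hf_map (i : ι) : Integrable f (c i • (μ i).map (Sigma.mk i)) :=
    ((measurableEmbedding_sigmaMk i).integrable_map_iff.2 (hf i)).smul_measure (hc i)
  rw [Measure.sum_fintype, integral_finsetSum_measure fun i _ => hf_map i]
  refine Finset.sum_congr rfl fun i _ => ?_
  rw [integral_smul_measure, (measurableEmbedding_sigmaMk i).integral_map]

end Sigma

theorem MeasureTheory.MemLp.integrable_mul_conj {α 𝕜 : Type*} [MeasurableSpace α] [RCLike 𝕜]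
    {μ : Measure α} {f g : α → 𝕜} (hf : MemLp f 2 μ) (hg : MemLp g 2 μ) :
    Integrable (fun a => f a * (starRingEnd 𝕜) (g a)) μ :=
  hf.integrable_mul hg.star

theorem rfs_average_general
    {X : Type*} {n : ℕ} {Ω : Fin n → Type*} [∀ i, MeasurableSpace (Ω i)]
    (μ : ∀ i, Measure (Ω i))
    (ψ : ∀ i, Ω i → X → ℂ) (k : Fin n → X → X → ℝ)
    (hL2 : ∀ i x, MemLp (fun ω => ψ i ω x) 2 (μ i))
    (hkernel : ∀ i x x',
      ∫ ω, ψ i ω x * (starRingEnd ℂ) (ψ i ω x') ∂(μ i) = (k i x x' : ℂ))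
    (α : Fin n → ℝ) (hα : ∀ i, 0 ≤ α i) :
    ∀ x x', ∫ p : Σ i, Ω i, ψ p.1 p.2 x * (starRingEnd ℂ) (ψ p.1 p.2 x')
        ∂(Measure.sum fun i => ENNReal.ofReal (α i) • Measure.map (Sigma.mk i) (μ i))
      = (((∑ i, α i * k i x x' : ℝ)) : ℂ) := by
  intro x x'
  rw [integral_sum_smul_map_sigmaMk μ (fun _ => ENNReal.ofReal_ne_top)
    fun i => (hL2 i x).integrable_mul_conj (hL2 i x')]
  simp only [hkernel, ENNReal.toReal_ofReal (hα _), Complex.real_smul]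
  push_cast
  rfl

/-- **RFS for an average (convex combination) of kernels.**
Given RFSs `(ψⁱ, μⁱ)` for normalized kernels `kⁱ` on a common set `X` and weights
`αᵢ ≥ 0` with `∑ᵢ αᵢ = 1`, the scheme on the disjoint union `Σ i, Ωᵢ` that samples `i`
with probability `αᵢ`, then `ω ∼ μⁱ`, and emits the feature `x ↦ ψⁱ(ω,x)`, is an RFS for
the kernel `k(x,x') = ∑ᵢ αᵢ kⁱ(x,x')`. -/
theorem rfs_average
    {X : Type*} {n : ℕ} {Ω : Fin n → Type*} [∀ i, MeasurableSpace (Ω i)]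
    (μ : ∀ i, Measure (Ω i)) [∀ i, IsProbabilityMeasure (μ i)]
    (ψ : ∀ i, Ω i → X → ℂ) (k : Fin n → X → X → ℝ)
    (hmeas : ∀ i x, Measurable fun ω => ψ i ω x)
    (hL2 : ∀ i x, MemLp (fun ω => ψ i ω x) 2 (μ i))
    (hnormalized : ∀ i x, k i x x = 1)
    (hkernel : ∀ i x x',
      ∫ ω, ψ i ω x * (starRingEnd ℂ) (ψ i ω x') ∂(μ i) = (k i x x' : ℂ))
    (α : Fin n → ℝ) (hα : ∀ i, 0 ≤ α i) (hαsum : ∑ i, α i = 1) :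
    ∀ x x', ∫ p : Σ i, Ω i, ψ p.1 p.2 x * (starRingEnd ℂ) (ψ p.1 p.2 x')
        ∂(Measure.sum fun i => ENNReal.ofReal (α i) • Measure.map (Sigma.mk i) (μ i))
      = (((∑ i, α i * k i x x' : ℝ)) : ℂ) :=
  rfs_average_general μ ψ k hL2 hkernel α hα
end
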